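/- arXiv:1705.09459 — 3 statements merged into one kernel-verified Lean document; each statement's English description precedes it below -/
import Mathlib

section
/- For each n ≥ 0 and all real x, q_{2n}(x) = (-1)^n · (1+x²)^{n+1/2} · T_{2n+1}(1/√(1+x²)), where T_m denotes the m-th Chebyshev polynomial of the first kind. -/
/-!
Expanding binomially, `q n x = (-1)^n · Im((x + i)^(n+1))`. For an odd exponent `2n+1`, the
factorisation `x + i = i · conj(1 + i x)` turns this into `(-1)^n · Re((1 + i x)^(2n+1))`.
Finally `1 + i x = √(1 + x²) · (cos θ + i sin θ)` with `θ = arctan x`, so that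
`cos θ = 1 / √(1 + x²)`, and de Moivre gives
`Re((1 + i x)^m) = √(1 + x²)^m · cos (m θ) = √(1 + x²)^m · T_m(cos θ)`.
-/

open Finset Polynomial Real

noncomputable def q (n : ℕ) (x : ℝ) : ℝ :=
  (-1 : ℝ)^n * ∑ k ∈ (Finset.range (n+1)).filter (fun k => Even k),
    ((n+1).choose (k+1) : ℝ) * (-1 : ℝ)^(k/2) * x^(n-k)

namespace Complex

open ComplexConjugate

theorem re_I_pow (k : ℕ) : (I ^ k).re = if Even k then (-1) ^ (k / 2) else 0 := by
  have hsq : I ^ 2 = ((-1 : ℝ) : ℂ) := by simp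
  obtain ⟨m, rfl | rfl⟩ := Nat.even_or_odd' k
  · rw [pow_mul, hsq, ← ofReal_pow, ofReal_re, if_pos (even_two_mul m),
      Nat.mul_div_cancel_left _ two_pos]
  · rw [pow_succ, pow_mul, hsq, ← ofReal_pow, re_ofReal_mul, I_re, mul_zero,
      if_neg (Nat.not_even_two_mul_add_one m)]

theorem im_ofReal_add_I_pow_succ (n : ℕ) (x : ℝ) :
    ((x + I) ^ (n + 1)).im = ∑ k ∈ (range (n + 1)).filter Even,
      ((n + 1).choose (k + 1) : ℝ) * (-1) ^ (k / 2) * x ^ (n - k) := by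
  rw [add_comm, add_pow, sum_range_succ', add_im, im_sum, sum_filter]
  refine (add_eq_left.mpr (by simp [← ofReal_pow])).trans (sum_congr rfl fun k _ => ?_)
  rw [pow_succ, Nat.add_sub_add_right, ← ofReal_pow, ← ofReal_natCast]
  simp only [mul_im, mul_re, ofReal_re, ofReal_im, I_re, I_im, re_I_pow]
  split_ifs <;> ring

theorem im_ofReal_add_I_pow_two_mul_add_one (n : ℕ) (x : ℝ) :
    ((x + I) ^ (2 * n + 1)).im = (-1) ^ n * ((1 + x * I) ^ (2 * n + 1)).re := by
  have hfactor : (x + I : ℂ) = I * conj (1 + x * I) := by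
    apply Complex.ext <;> simp
  have hsq : I ^ 2 = ((-1 : ℝ) : ℂ) := by simp
  rw [hfactor, mul_pow, ← map_pow, pow_succ, pow_mul, hsq, ← ofReal_pow, mul_assoc,
    im_ofReal_mul, I_mul_im, conj_re]

theorem re_one_add_mul_I_pow (m : ℕ) (x : ℝ) :
    ((1 + x * I) ^ m).re =
      √(1 + x ^ 2) ^ m * (Chebyshev.T ℝ m).eval (1 / √(1 + x ^ 2)) := by
  have hpolar : (1 + x * I : ℂ) =
      √(1 + x ^ 2) * (cos (Real.arctan x) + sin (Real.arctan x) * I) := by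
    have hr : √(1 + x ^ 2) ≠ 0 := by positivity
    rw [← ofReal_cos, ← ofReal_sin, Real.cos_arctan, Real.sin_arctan]
    apply Complex.ext <;> simp <;> field_simp
  rw [hpolar, mul_pow, cos_add_sin_mul_I_pow, ← ofReal_pow, re_ofReal_mul, ← Real.cos_arctan,
    Chebyshev.T_real_cos, ← ofReal_natCast, ← ofReal_mul, ← ofReal_cos, ← ofReal_sin,
    add_re, ofReal_re, mul_I_re, ofReal_im, neg_zero, add_zero, Int.cast_natCast]

end Complex

theorem q_eq_neg_one_pow_mul_im (n : ℕ) (x : ℝ) :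
    q n x = (-1) ^ n * ((x + Complex.I) ^ (n + 1)).im := by
  rw [q, Complex.im_ofReal_add_I_pow_succ]

theorem q_even_chebyshevT (n : ℕ) (x : ℝ) :
    q (2 * n) x = (-1 : ℝ)^n * ((1 + x^2)^n * Real.sqrt (1 + x^2)) *
      (Polynomial.Chebyshev.T ℝ (2 * n + 1)).eval (1 / Real.sqrt (1 + x^2)) := by
  have hsqrt : √(1 + x ^ 2) ^ (2 * n + 1) = (1 + x ^ 2) ^ n * √(1 + x ^ 2) := by
    rw [pow_succ, pow_mul, sq_sqrt (by positivity)]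
  rw [q_eq_neg_one_pow_mul_im, Complex.im_ofReal_add_I_pow_two_mul_add_one,
    Complex.re_one_add_mul_I_pow, hsqrt, pow_mul, neg_one_sq, one_pow, one_mul]
  push_cast
  ring
end

section
/- For each n ≥ 1 and all real x, the (2n)-th derivative of arctan at x equals (-1)^n · (2n-1)! / (1+x²)^{n+1/2} · x · U_{2n-1}(1/√(1+x²)). -/
open Polynomial Real

/-!
Write `θ = arctan x`, so that `arctan' = cos² θ`. Differentiating `cos^k θ · sin (k (θ + π/2))`
gives `k cos^(k+1) θ · sin ((k+1)(θ + π/2))` by the addition formula, hence the `(m+1)`-st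
derivative of `arctan` is `m! cos^(m+1) θ · sin ((m+1)(θ + π/2))`. For `m + 1 = 2n` the phase
`nπ` contributes `(-1)^n`, and `sin (2nθ) = U_{2n-1}(cos θ) sin θ` with `cos θ = 1/√(1+x²)`,
`sin θ = x/√(1+x²)`.
-/

theorem hasDerivAt_cos_arctan_pow_mul_sin (k : ℕ) (x : ℝ) :
    HasDerivAt (fun y => cos (arctan y) ^ (k + 1) * sin ((k + 1) * (arctan y + π / 2)))
      ((k + 1) * (cos (arctan x) ^ (k + 2) * sin ((k + 1 + 1) * (arctan x + π / 2)))) x := by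
  have hθ : HasDerivAt arctan (cos (arctan x) ^ 2) x := cos_sq_arctan x ▸ hasDerivAt_arctan x
  have hcos := hθ.cos.pow (k + 1)
  have hsin := ((hθ.add_const (π / 2)).const_mul ((k : ℝ) + 1)).sin
  have hshift (θ : ℝ) : sin ((k + 1 + 1) * (θ + π / 2)) =
      cos θ * cos ((k + 1) * (θ + π / 2)) - sin θ * sin ((k + 1) * (θ + π / 2)) := by
    rw [show ((k : ℝ) + 1 + 1) * (θ + π / 2) = (k + 1) * (θ + π / 2) + θ + π / 2 by ring,
      sin_add_pi_div_two, cos_add]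
    ring
  refine (hcos.mul hsin).congr_deriv ?_
  rw [hshift, Nat.add_sub_cancel, Pi.pow_apply]
  push_cast
  ring

theorem iteratedDeriv_succ_arctan (m : ℕ) (x : ℝ) :
    iteratedDeriv (m + 1) arctan x =
      m.factorial * (cos (arctan x) ^ (m + 1) * sin ((m + 1) * (arctan x + π / 2))) := by
  induction m generalizing x with
  | zero =>
    simp only [iteratedDeriv_one, (hasDerivAt_arctan x).deriv, ← cos_sq_arctan,
      Nat.factorial_zero, Nat.cast_zero, zero_add, one_mul, sin_add_pi_div_two]
    ring
  | succ m ih =>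
    rw [iteratedDeriv_succ, funext ih,
      ((hasDerivAt_cos_arctan_pow_mul_sin m x).const_mul (m.factorial : ℝ)).deriv,
      Nat.factorial_succ]
    push_cast
    ring

theorem arctan_even_deriv_chebyshevU (n : ℕ) (hn : 1 ≤ n) (x : ℝ) :
    iteratedDeriv (2 * n) Real.arctan x =
      (-1 : ℝ)^n * (2 * n - 1).factorial / ((1 + x^2)^n * Real.sqrt (1 + x^2)) * x *
        (Polynomial.Chebyshev.U ℝ (2 * n - 1)).eval (1 / Real.sqrt (1 + x^2)) := by
  obtain ⟨m, rfl⟩ : ∃ m, n = m + 1 := ⟨n - 1, by omega⟩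
  set θ := arctan x
  have hcos_pow : cos θ ^ (2 * m + 1 + 1) = 1 / (1 + x ^ 2) ^ (m + 1) := by
    rw [show 2 * m + 1 + 1 = 2 * (m + 1) by ring, pow_mul, cos_sq_arctan, one_div_pow]
  have hsin_shift : sin (((2 * m + 1 : ℕ) + 1 : ℝ) * (θ + π / 2)) =
      (-1) ^ (m + 1) * sin ((2 * (m + 1) : ℝ) * θ) := by
    rw [← sin_add_nat_mul_pi]; congr 1; push_cast; ring
  have hU : (Chebyshev.U ℝ (2 * ((m + 1 : ℕ) : ℤ) - 1)).eval (cos θ) * sin θ =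
      sin ((2 * (m + 1) : ℝ) * θ) := by
    rw [Chebyshev.U_real_cos]; congr 2; push_cast; ring
  rw [show 2 * (m + 1) = 2 * m + 1 + 1 by ring, iteratedDeriv_succ_arctan, Nat.add_sub_cancel,
    hcos_pow, hsin_shift, ← hU, cos_arctan, sin_arctan]
  have hsqrt : √(1 + x ^ 2) ≠ 0 := (sqrt_pos.2 (by positivity)).ne'
  field_simp
end

section
/- For each n ≥ 1 and all real x, sin(n · arccot(x)) = (-1)^{n-1} · q_{n-1}(x) / (1+x²)^{n/2}, where arccot(x) = π/2 - arctan(x). -/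
/-!
Since `x + i = √(1 + x²) · exp (i · arccot x)`, de Moivre gives
`√(1 + x²)ⁿ · sin (n · arccot x) = Im ((x + i)ⁿ)`, and expanding `(i + x)ⁿ` by the binomial
theorem, only the odd powers `i^(k+1) = (-1)^(k/2) i` (`k` even) contribute to the imaginary part,
which is `(-1)^(n-1) q_{n-1}(x)`.
-/

open Finset Polynomial Real

noncomputable def arccot (x : ℝ) : ℝ := Real.pi / 2 - Real.arctan x

open Complex in
lemma Complex.im_I_pow_succ (k : ℕ) :
    (I ^ (k + 1)).im = if Even k then (-1 : ℝ) ^ (k / 2) else 0 := by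
  have neg_one_pow (m : ℕ) : (-1 : ℂ) ^ m = ((-1 : ℝ) ^ m : ℝ) := by push_cast; rfl
  obtain ⟨m, rfl | rfl⟩ := Nat.even_or_odd' k
  · rw [if_pos (even_two_mul m), Nat.mul_div_cancel_left m two_pos, pow_succ, pow_mul, I_sq,
      neg_one_pow, mul_I_im, ofReal_re]
  · rw [if_neg (Nat.not_even_iff_odd.2 (odd_two_mul_add_one m)), pow_succ, pow_succ, pow_mul,
      I_sq, neg_one_pow, mul_I_im, mul_I_re, ofReal_im, neg_zero]

open Complex in
lemma Complex.im_ofReal_add_I_pow (x : ℝ) (n : ℕ) :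
    (((x : ℂ) + I) ^ n).im =
      ∑ k ∈ (range n).filter Even, (n.choose (k + 1) : ℝ) * (-1) ^ (k / 2) * x ^ (n - 1 - k) := by
  rw [add_comm, add_pow, im_sum, sum_range_succ', sum_filter]
  simp only [← ofReal_pow, ← ofReal_natCast, mul_assoc, ← ofReal_mul, im_mul_ofReal,
    pow_zero, one_im, zero_mul, add_zero, im_I_pow_succ]
  refine sum_congr rfl fun k _ => ?_
  rw [Nat.sub_sub, add_comm 1 k]
  split_ifs <;> ring

lemma neg_one_pow_mul_q (n : ℕ) (x : ℝ) :
    (-1) ^ n * q n x = (((x : ℂ) + Complex.I) ^ (n + 1)).im := by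
  rw [Complex.im_ofReal_add_I_pow, q, ← mul_assoc, ← pow_add, Even.neg_one_pow ⟨n, rfl⟩, one_mul]
  rfl

lemma cos_arccot (x : ℝ) : cos (arccot x) = x / √(1 + x ^ 2) := by
  rw [arccot, cos_pi_div_two_sub, sin_arctan]

lemma sin_arccot (x : ℝ) : sin (arccot x) = 1 / √(1 + x ^ 2) := by
  rw [arccot, sin_pi_div_two_sub, cos_arctan]

lemma ofReal_add_I_eq_sqrt_mul_exp_arccot (x : ℝ) :
    (x : ℂ) + Complex.I = √(1 + x ^ 2) * Complex.exp (arccot x * Complex.I) := by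
  have hr : √(1 + x ^ 2) ≠ 0 := (sqrt_pos.2 (by positivity)).ne'
  apply Complex.ext <;>
    simp [Complex.exp_ofReal_mul_I_re, Complex.exp_ofReal_mul_I_im, cos_arccot, sin_arccot,
      mul_div_cancel₀ _ hr, mul_inv_cancel₀ hr]

lemma sqrt_one_add_sq_pow_mul_sin_nat_mul_arccot (x : ℝ) (n : ℕ) :
    √(1 + x ^ 2) ^ n * sin (n * arccot x) = (((x : ℂ) + Complex.I) ^ n).im := by
  rw [ofReal_add_I_eq_sqrt_mul_exp_arccot, mul_pow, ← Complex.exp_nat_mul, ← mul_assoc,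
    ← Complex.ofReal_pow, ← Complex.ofReal_natCast, ← Complex.ofReal_mul,
    Complex.im_ofReal_mul, Complex.exp_ofReal_mul_I_im]

lemma Real.sqrt_pow {a : ℝ} (ha : 0 ≤ a) (n : ℕ) : √(a ^ n) = √a ^ n := by
  rw [← sqrt_sq (pow_nonneg (sqrt_nonneg a) n), ← pow_mul, mul_comm, pow_mul, sq_sqrt ha]

theorem sin_n_arccot (n : ℕ) (hn : 1 ≤ n) (x : ℝ) :
    Real.sin (n * arccot x) = (-1 : ℝ)^(n-1) * q (n-1) x / Real.sqrt ((1 + x^2)^n) := by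
  obtain ⟨m, rfl⟩ := Nat.exists_eq_add_of_le' hn
  have hr : 0 < √(1 + x ^ 2) ^ (m + 1) := by positivity
  rw [Nat.add_sub_cancel, neg_one_pow_mul_q, ← sqrt_one_add_sq_pow_mul_sin_nat_mul_arccot,
    Real.sqrt_pow (by positivity), mul_div_cancel_left₀ _ hr.ne']
end
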